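/- arXiv:1204.3873 — 7 statements merged into one kernel-verified Lean document; each statement's English description precedes it below -/
import Mathlib

section
/- For any unit vectors y, z in R^d and any real α ≥ 1, we have ‖y − z‖ + α² − 1 ≤ (√5/2)·‖y − αz‖·(1 + α). -/
/-!
Put `s = ‖y - z‖`, `u = α - 1` and `w = 2 s / (1 + α)`. For unit vectors,
`‖y - α • z‖² = u² + α s² ≥ u² + w²` because `α (1 + α)² ≥ 4`, while
`‖y - z‖ + α² - 1 = (1 + α) (u + w / 2)`; so the claim is Cauchy–Schwarz for the vectors
`(u, w)` and `(1, 1/2)`, the latter of norm `√5 / 2`.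
-/

theorem norm_sub_smul_sq_of_norm_eq_one {E : Type*} [NormedAddCommGroup E]
    [InnerProductSpace ℝ E] {y z : E} (hy : ‖y‖ = 1) (hz : ‖z‖ = 1) (a : ℝ) :
    ‖y - a • z‖ ^ 2 = (a - 1) ^ 2 + a * ‖y - z‖ ^ 2 := by
  rw [norm_sub_sq_real, norm_sub_sq_real, real_inner_smul_right, norm_smul, mul_pow,
    Real.norm_eq_abs, sq_abs, hy, hz]
  ring

theorem add_half_le_sqrt_five_div_two_mul {u w N : ℝ} (h : u ^ 2 + w ^ 2 ≤ N ^ 2)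
    (hN : 0 ≤ N) : u + w / 2 ≤ √5 / 2 * N := by
  have hsq : (2 * u + w) ^ 2 ≤ (√5 * N) ^ 2 := by
    rw [mul_pow, Real.sq_sqrt (by norm_num)]
    nlinarith [sq_nonneg (u - 2 * w)]
  have := (le_abs_self _).trans (abs_le_of_sq_le_sq hsq (by positivity))
  linarith

theorem stmt_0 (d : ℕ) (y z : EuclideanSpace ℝ (Fin d))
    (hy : ‖y‖ = 1) (hz : ‖z‖ = 1) (α : ℝ) (hα : 1 ≤ α) :
    ‖y - z‖ + α ^ 2 - 1 ≤ Real.sqrt 5 / 2 * ‖y - α • z‖ * (1 + α) := by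
  set s := ‖y - z‖
  have hα' : 0 < 1 + α := by linarith
  have hw : (2 * s / (1 + α)) ^ 2 ≤ α * s ^ 2 := by
    have h4 : 4 ≤ α * (1 + α) ^ 2 := by nlinarith
    rw [div_pow, div_le_iff₀ (by positivity)]
    nlinarith [mul_le_mul_of_nonneg_right h4 (sq_nonneg s)]
  have hN : (α - 1) ^ 2 + (2 * s / (1 + α)) ^ 2 ≤ ‖y - α • z‖ ^ 2 := by
    rw [norm_sub_smul_sq_of_norm_eq_one hy hz]
    linarith
  calc s + α ^ 2 - 1 = (1 + α) * ((α - 1) + 2 * s / (1 + α) / 2) := by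
        field_simp
        ring
    _ ≤ (1 + α) * (√5 / 2 * ‖y - α • z‖) := by
        gcongr
        exact add_half_le_sqrt_five_div_two_mul hN (norm_nonneg _)
    _ = √5 / 2 * ‖y - α • z‖ * (1 + α) := by ring
end

section
/- For all t ∈ [0,2] and α ≥ 1, the inequality (t + α² − 1)² ≤ (5/4)·((α² − 1)² + α·t²·(1+α)²) holds. -/
/-! With `s = α² - 1`, the difference of the two sides is the sum of squares
`(s / 2 - 2t)² + (5/4) t² (α (1 + α)² - 4)`, and `α (1 + α)² ≥ 4` once `α ≥ 1`. -/

theorem four_le_mul_one_add_sq {α : ℝ} (hα : 1 ≤ α) : 4 ≤ α * (1 + α) ^ 2 :=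
  calc (4 : ℝ) = 1 * (1 + 1) ^ 2 := by norm_num
    _ ≤ α * (1 + α) ^ 2 := by gcongr

theorem five_fourths_bound_sub_sq_eq (t α : ℝ) :
    5 / 4 * ((α ^ 2 - 1) ^ 2 + α * t ^ 2 * (1 + α) ^ 2) - (t + α ^ 2 - 1) ^ 2
      = ((α ^ 2 - 1) / 2 - 2 * t) ^ 2 + 5 / 4 * t ^ 2 * (α * (1 + α) ^ 2 - 4) := by
  ring

theorem stmt_3_general (t α : ℝ) (hα : 1 ≤ α) :
    (t + α ^ 2 - 1) ^ 2 ≤ 5 / 4 * ((α ^ 2 - 1) ^ 2 + α * t ^ 2 * (1 + α) ^ 2) := by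
  have hsq := sq_nonneg ((α ^ 2 - 1) / 2 - 2 * t)
  have hrest : 0 ≤ 5 / 4 * t ^ 2 * (α * (1 + α) ^ 2 - 4) :=
    mul_nonneg (by positivity) (sub_nonneg.2 (four_le_mul_one_add_sq hα))
  linarith [five_fourths_bound_sub_sq_eq t α]

theorem stmt_3 (t α : ℝ) (ht0 : 0 ≤ t) (ht2 : t ≤ 2) (hα : 1 ≤ α) :
    (t + α ^ 2 - 1) ^ 2 ≤ 5 / 4 * ((α ^ 2 - 1) ^ 2 + α * t ^ 2 * (1 + α) ^ 2) :=
  stmt_3_general t α hα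
end

section
/- Let x : V → R^d with all values of unit norm or zero (v_i ∈ S^{d-1} ∪ {0}), not identically zero. Then η(x) ≤ η₁(x), where η(x) = (1/2)·Σ_{ij} w_{ij}‖x_i − ρ_{ij}x_j‖² / Σ_i d_i‖x_i‖² and η₁(x) = Σ_{ij} w_{ij}‖x_i − ρ_{ij}x_j‖ / Σ_i d_i‖x_i‖. -/
/-! Since ‖x_i‖ ∈ {0, 1}, the two denominators coincide, and every edge discrepancy
t = ‖x_i − ρ_{ij} x_j‖ lies in [0, 2] because ρ_{ij} is an isometry, so t²/2 ≤ t termwise. -/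

open Matrix

theorem Matrix.norm_toEuclideanLin_of_mem_unitaryGroup {𝕜 m : Type*} [RCLike 𝕜] [Fintype m]
    [DecidableEq m] {A : Matrix m m 𝕜} (hA : A ∈ unitaryGroup m 𝕜) (v : EuclideanSpace 𝕜 m) :
    ‖toEuclideanLin A v‖ = ‖v‖ := by
  have hAA : Aᴴ * A = 1 := mem_unitaryGroup_iff'.mp hA
  have h : inner 𝕜 (toEuclideanLin A v) (toEuclideanLin A v) = inner 𝕜 v v := by
    rw [← LinearMap.adjoint_inner_right, ← toEuclideanLin_conjTranspose_eq_adjoint]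
    simp [toLpLin_apply, mulVec_mulVec, hAA]
  rw [inner_self_eq_norm_sq_to_K, inner_self_eq_norm_sq_to_K] at h
  exact (pow_left_inj₀ (norm_nonneg _) (norm_nonneg _) two_ne_zero).mp (by exact_mod_cast h)

theorem half_mul_sq_le_self {t : ℝ} (h₀ : 0 ≤ t) (h₂ : t ≤ 2) : 1 / 2 * t ^ 2 ≤ t := by
  nlinarith

theorem half_mul_norm_sub_sq_le_norm_sub {E : Type*} [SeminormedAddCommGroup E] {a b : E}
    (ha : ‖a‖ ≤ 1) (hb : ‖b‖ ≤ 1) : 1 / 2 * ‖a - b‖ ^ 2 ≤ ‖a - b‖ :=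
  half_mul_sq_le_self (norm_nonneg _) <| by linarith [norm_sub_le a b]

theorem stmt_8_general (n d : ℕ) (w : Fin n → Fin n → ℝ)
    (hw : ∀ i j, 0 ≤ w i j)
    (ρ : Fin n → Fin n → Matrix (Fin d) (Fin d) ℝ)
    (hρ : ∀ i j, ρ i j ∈ Matrix.orthogonalGroup (Fin d) ℝ)
    (x : Fin n → EuclideanSpace ℝ (Fin d))
    (hx : ∀ i, ‖x i‖ = 0 ∨ ‖x i‖ = 1) :
    ((1 / 2) * ∑ i, ∑ j, w i j * ‖x i - Matrix.toEuclideanLin (ρ i j) (x j)‖ ^ 2) /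
        (∑ i, (∑ j, w i j) * ‖x i‖ ^ 2)
      ≤ (∑ i, ∑ j, w i j * ‖x i - Matrix.toEuclideanLin (ρ i j) (x j)‖) /
        (∑ i, (∑ j, w i j) * ‖x i‖) := by
  have hx_le : ∀ i, ‖x i‖ ≤ 1 := fun i => by rcases hx i with h | h <;> simp [h]
  have hx_sq : ∀ i, ‖x i‖ ^ 2 = ‖x i‖ := fun i => by rcases hx i with h | h <;> simp [h]
  have hdenom_nonneg : 0 ≤ ∑ i, (∑ j, w i j) * ‖x i‖ :=
    Finset.sum_nonneg fun i _ => mul_nonneg (Finset.sum_nonneg fun j _ => hw i j) (norm_nonneg _)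
  have hedge : ∀ i j, 1 / 2 * ‖x i - toEuclideanLin (ρ i j) (x j)‖ ^ 2
      ≤ ‖x i - toEuclideanLin (ρ i j) (x j)‖ := fun i j =>
    half_mul_norm_sub_sq_le_norm_sub (hx_le i)
      ((norm_toEuclideanLin_of_mem_unitaryGroup (hρ i j) (x j)).trans_le (hx_le j))
  simp_rw [hx_sq]
  refine div_le_div_of_nonneg_right ?_ hdenom_nonneg
  simp_rw [Finset.mul_sum, mul_left_comm (1 / 2 : ℝ)]
  exact Finset.sum_le_sum fun i _ => Finset.sum_le_sum fun j _ =>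
    mul_le_mul_of_nonneg_left (hedge i j) (hw i j)

theorem stmt_8 (n d : ℕ) (w : Fin n → Fin n → ℝ)
    (hw : ∀ i j, 0 ≤ w i j) (hwsymm : ∀ i j, w i j = w j i)
    (hdeg : ∀ i, 0 < ∑ j, w i j)
    (ρ : Fin n → Fin n → Matrix (Fin d) (Fin d) ℝ)
    (hρ : ∀ i j, ρ i j ∈ Matrix.orthogonalGroup (Fin d) ℝ)
    (hρsymm : ∀ i j, ρ j i = (ρ i j)ᵀ)
    (x : Fin n → EuclideanSpace ℝ (Fin d))
    (hx : ∀ i, ‖x i‖ = 0 ∨ ‖x i‖ = 1)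
    (hpos : 0 < ∑ i, (∑ j, w i j) * ‖x i‖) :
    ((1 / 2) * ∑ i, ∑ j, w i j * ‖x i - Matrix.toEuclideanLin (ρ i j) (x j)‖ ^ 2) /
        (∑ i, (∑ j, w i j) * ‖x i‖ ^ 2)
      ≤ (∑ i, ∑ j, w i j * ‖x i - Matrix.toEuclideanLin (ρ i j) (x j)‖) /
        (∑ i, (∑ j, w i j) * ‖x i‖) :=
  stmt_8_general n d w hw ρ hρ x hx
end

section
/- Let x_i, x_j ∈ R^d with ‖x_j‖ ≤ ‖x_i‖ ≤ 1, x_j ≠ 0, and let u be uniformly distributed on [0,1]. Define x_k^u = x_k/‖x_k‖ if ‖x_k‖² > u and x_k^u = 0 otherwise. Then E_u ‖x_i^u − x_j^u‖ = ‖x_j‖²·‖x_i/‖x_i‖ − x_j/‖x_j‖‖ + (‖x_i‖² − ‖x_j‖²). -/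
/-! For `u < ‖xj‖²` both roundings are unit vectors, so their distance is that of the
normalized vectors; for `‖xj‖² ≤ u < ‖xi‖²` only `xi` survives and the distance is `1`;
above `‖xi‖²` both vanish. Integrating this step function over `[0, 1]` gives the formula. -/

open MeasureTheory Set

theorem antitone_ite_lt_one_zero (c : ℝ) :
    Antitone fun u : ℝ => if u < c then (1 : ℝ) else 0 := by
  intro u v huv
  by_cases hv : v < c
  · simp [hv, huv.trans_lt hv]
  · simp only [hv, if_false]
    split_ifs <;> norm_num

theorem intervalIntegral_ite_lt_one_zero {a b c : ℝ} (hac : a ≤ c) (hcb : c ≤ b) :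
    ∫ u in a..b, (if u < c then (1 : ℝ) else 0) = c - a := by
  change ∫ u in a..b, (Iio c).indicator 1 u = c - a
  rw [intervalIntegral.integral_of_le (hac.trans hcb), integral_indicator_one measurableSet_Iio,
    measureReal_restrict_apply measurableSet_Iio]
  have hIoo : Iio c ∩ Ioc a b = Ioo a c := by
    ext u
    simp only [mem_inter_iff, mem_Iio, mem_Ioc, mem_Ioo]
    constructor
    · rintro ⟨huc, hau, -⟩
      exact ⟨hau, huc⟩
    · rintro ⟨hau, huc⟩
      exact ⟨huc, hau, huc.le.trans hcb⟩
  rw [hIoo, Real.volume_real_Ioo_of_le hac]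

variable {E : Type*} [NormedAddCommGroup E] [NormedSpace ℝ E]

noncomputable def thresholdNormalize (u : ℝ) (x : E) : E :=
  if u < ‖x‖ ^ 2 then ‖x‖⁻¹ • x else 0

theorem norm_thresholdNormalize_sub {u : ℝ} (hu : 0 ≤ u) {x y : E} (hyx : ‖y‖ ≤ ‖x‖) :
    ‖thresholdNormalize u x - thresholdNormalize u y‖ =
      (‖‖x‖⁻¹ • x - ‖y‖⁻¹ • y‖ - 1) * (if u < ‖y‖ ^ 2 then 1 else 0) +
        (if u < ‖x‖ ^ 2 then 1 else 0) := by
  unfold thresholdNormalize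
  by_cases hy : u < ‖y‖ ^ 2
  · have hx : u < ‖x‖ ^ 2 := hy.trans_le (pow_le_pow_left₀ (norm_nonneg y) hyx 2)
    simp [hx, hy]
  by_cases hx : u < ‖x‖ ^ 2
  · have hx0 : x ≠ 0 := by
      rintro rfl
      simp only [norm_zero] at hx
      linarith
    simp only [hx, hy, if_true, if_false, sub_zero, mul_zero, zero_add]
    rw [norm_smul, norm_inv, norm_norm, inv_mul_cancel₀ (norm_ne_zero_iff.2 hx0)]
  · simp [hx, hy]

theorem stmt_10_general (d : ℕ) (xi xj : EuclideanSpace ℝ (Fin d))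
    (hji : ‖xj‖ ≤ ‖xi‖) (hi1 : ‖xi‖ ≤ 1) :
    (∫ u in (0:ℝ)..1,
        ‖(if u < ‖xi‖ ^ 2 then ‖xi‖⁻¹ • xi else 0) -
          (if u < ‖xj‖ ^ 2 then ‖xj‖⁻¹ • xj else 0)‖)
      = ‖xj‖ ^ 2 * ‖‖xi‖⁻¹ • xi - ‖xj‖⁻¹ • xj‖ + (‖xi‖ ^ 2 - ‖xj‖ ^ 2) := by
  have hji2 : ‖xj‖ ^ 2 ≤ ‖xi‖ ^ 2 := pow_le_pow_left₀ (norm_nonneg _) hji 2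
  have hi2 : ‖xi‖ ^ 2 ≤ 1 := pow_le_one₀ (norm_nonneg _) hi1
  change ∫ u in (0 : ℝ)..1, ‖thresholdNormalize u xi - thresholdNormalize u xj‖ = _
  rw [intervalIntegral.integral_congr fun u hu =>
      norm_thresholdNormalize_sub (by simpa using hu.1) hji,
    intervalIntegral.integral_add
      ((antitone_ite_lt_one_zero _).intervalIntegrable.const_mul _)
      (antitone_ite_lt_one_zero _).intervalIntegrable,
    intervalIntegral.integral_const_mul,
    intervalIntegral_ite_lt_one_zero (sq_nonneg _) (hji2.trans hi2),
    intervalIntegral_ite_lt_one_zero (sq_nonneg _) hi2]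
  ring

theorem stmt_10 (d : ℕ) (xi xj : EuclideanSpace ℝ (Fin d))
    (hji : ‖xj‖ ≤ ‖xi‖) (hi1 : ‖xi‖ ≤ 1) (hj : xj ≠ 0) :
    (∫ u in (0:ℝ)..1,
        ‖(if u < ‖xi‖ ^ 2 then ‖xi‖⁻¹ • xi else 0) -
          (if u < ‖xj‖ ^ 2 then ‖xj‖⁻¹ • xj else 0)‖)
      = ‖xj‖ ^ 2 * ‖‖xi‖⁻¹ • xi - ‖xj‖⁻¹ • xj‖ + (‖xi‖ ^ 2 - ‖xj‖ ^ 2) :=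
  stmt_10_general d xi xj hji hi1
end

section
/- Let x_i, x_j ∈ R^d with ‖x_j‖ ≤ ‖x_i‖ ≤ 1 and x_j ≠ 0. Then ‖x_j‖²·‖x_i/‖x_i‖ − x_j/‖x_j‖‖ + (‖x_i‖² − ‖x_j‖²) ≤ (√5/2)·‖x_i − x_j‖·(‖x_i‖ + ‖x_j‖). -/
/-!
Write `a = ‖xi‖`, `b = ‖xj‖` and `s` for the distance between the normalized vectors. Expanding both
squared norms gives `‖xi - xj‖² = (a - b)² + a b s²`, so after squaring the claim becomes a polynomial
inequality in `a`, `b`, `s`. Its defect is a sum of squares,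
`(2 b² s - (a² - b²)/2)² + (5/4) b (a (a + b)² - 4 b³) s²`, and `a (a + b)² ≥ 4 b³` since `a ≥ b`.
-/

open NormedSpace RealInnerProductSpace

theorem norm_sub_sq_eq_sq_sub_add_mul_norm_normalize_sub_sq {E : Type*} [NormedAddCommGroup E]
    [InnerProductSpace ℝ E] (x y : E) :
    ‖x - y‖ ^ 2 = (‖x‖ - ‖y‖) ^ 2 + ‖x‖ * ‖y‖ * ‖normalize x - normalize y‖ ^ 2 := by
  have norm_mul_norm_normalize (z : E) : ‖z‖ * ‖normalize z‖ = ‖z‖ := by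
    conv_rhs => rw [← norm_smul_normalize z]
    rw [norm_smul, norm_norm]
  have inner_eq : ‖x‖ * ‖y‖ * ⟪normalize x, normalize y⟫ = ⟪x, y⟫ := by
    conv_rhs => rw [← norm_smul_normalize x, ← norm_smul_normalize y]
    rw [real_inner_smul_left, real_inner_smul_right]
    ring
  rw [norm_sub_sq_real, norm_sub_sq_real]
  linear_combination -(‖y‖ * (‖normalize x‖ + 1)) * norm_mul_norm_normalize x
    - (‖x‖ * (‖normalize y‖ + 1)) * norm_mul_norm_normalize y + 2 * inner_eq

theorem four_mul_pow_three_le_mul_add_sq {a b : ℝ} (hb : 0 ≤ b) (hba : b ≤ a) :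
    4 * b ^ 3 ≤ a * (a + b) ^ 2 := by
  have hsq : (b + b) ^ 2 ≤ (a + b) ^ 2 := pow_le_pow_left₀ (by linarith) (by linarith) 2
  nlinarith [mul_le_mul hba hsq (by positivity) (by linarith)]

theorem sq_mul_add_sq_sub_sq_le {a b : ℝ} (hb : 0 ≤ b) (hba : b ≤ a) (s : ℝ) :
    (b ^ 2 * s + (a ^ 2 - b ^ 2)) ^ 2 ≤ 5 / 4 * ((a - b) ^ 2 + a * b * s ^ 2) * (a + b) ^ 2 := by
  have hcoeff : 0 ≤ 5 / 4 * b * (a * (a + b) ^ 2 - 4 * b ^ 3) := by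
    have := sub_nonneg.2 (four_mul_pow_three_le_mul_add_sq hb hba)
    positivity
  linear_combination sq_nonneg (2 * b ^ 2 * s - (a ^ 2 - b ^ 2) / 2)
    + mul_nonneg hcoeff (sq_nonneg s)

theorem stmt_11_general (d : ℕ) (xi xj : EuclideanSpace ℝ (Fin d))
    (hji : ‖xj‖ ≤ ‖xi‖) :
    ‖xj‖ ^ 2 * ‖‖xi‖⁻¹ • xi - ‖xj‖⁻¹ • xj‖ + (‖xi‖ ^ 2 - ‖xj‖ ^ 2)
      ≤ Real.sqrt 5 / 2 * ‖xi - xj‖ * (‖xi‖ + ‖xj‖) := by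
  change ‖xj‖ ^ 2 * ‖normalize xi - normalize xj‖ + _ ≤ _
  have hsq := sq_mul_add_sq_sub_sq_le (norm_nonneg xj) hji ‖normalize xi - normalize xj‖
  rw [← norm_sub_sq_eq_sq_sub_add_mul_norm_normalize_sub_sq] at hsq
  refine (le_abs_self _).trans (abs_le_of_sq_le_sq (hsq.trans_eq ?_) (by positivity))
  rw [mul_pow, mul_pow, div_pow, Real.sq_sqrt (by norm_num)]
  ring

theorem stmt_11 (d : ℕ) (xi xj : EuclideanSpace ℝ (Fin d))
    (hji : ‖xj‖ ≤ ‖xi‖) (hi1 : ‖xi‖ ≤ 1) (hj : xj ≠ 0) :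
    ‖xj‖ ^ 2 * ‖‖xi‖⁻¹ • xi - ‖xj‖⁻¹ • xj‖ + (‖xi‖ ^ 2 - ‖xj‖ ^ 2)
      ≤ Real.sqrt 5 / 2 * ‖xi - xj‖ * (‖xi‖ + ‖xj‖) :=
  stmt_11_general d xi xj hji
end

section
/- Let x : V → R^d with Σ_i d_i‖x_i‖² = vol(G), and for δ > 0 define the ill-balanced set Ib_x(δ) = { i ∈ V : |‖x_i‖ − 1| ≥ δ }. Then vol(Ib_x(δ))/vol(G) ≤ (4/δ²)·η(x)/λ₂(L₀), where vol(S) = Σ_{i∈S} d_i. -/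
open Matrix
open scoped Classical

/-! Write `d i = ∑ j, w i j` and `r i = ‖x i‖`, and let `t` be the `d`-weighted mean of `r`.
The vector `(√(d i) * (r i - t))` is orthogonal to the kernel vector `(√(d i))` of the normalized
Laplacian, so the spectral gap yields the Poincaré inequality
`λ₂ * ∑ d i (r i - t)² ≤ ½ ∑ w i j (r i - r j)²`, and the right side is at most the frustration
because each `ρ i j` is an isometry. The normalization `∑ d i (r i)² = ∑ d i` forces
`0 ≤ t ≤ 1`, whence `∑ d i (r i - 1)² ≤ 2 ∑ d i (r i - t)²`, and Chebyshev's inequality on the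
ill-balanced set concludes. -/

namespace Tuple

theorem comp_sort_one_le_of_ne_sort_zero {n : ℕ} {α : Type*} [LinearOrder α] (hn : 1 < n)
    (f : Fin n → α) {k : Fin n} (hk : k ≠ sort f ⟨0, by omega⟩) :
    (f ∘ sort f) ⟨1, hn⟩ ≤ f k := by
  have hj : (⟨1, hn⟩ : Fin n) ≤ (sort f).symm k := by
    rw [Fin.le_def, Nat.one_le_iff_ne_zero]
    intro h
    exact hk (by rw [← (sort f).apply_symm_apply k]; exact congrArg _ (Fin.ext h))
  simpa using monotone_sort f hj

end Tuple

namespace Matrix.IsHermitian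

section

variable {n : Type*} [Fintype n] [DecidableEq n] {A : Matrix n n ℝ} (hA : A.IsHermitian)

theorem dotProduct_eq_sum_eigenvectorBasis (u v : n → ℝ) :
    u ⬝ᵥ v = ∑ k, (hA.eigenvectorBasis k ⬝ᵥ u) * (hA.eigenvectorBasis k ⬝ᵥ v) := by
  have := hA.eigenvectorBasis.sum_inner_mul_inner (WithLp.toLp 2 u) (WithLp.toLp 2 v)
  simp only [EuclideanSpace.inner_eq_star_dotProduct, star_trivial] at this
  simp only [← this, dotProduct_comm u, dotProduct_comm v]

theorem eigenvectorBasis_dotProduct_mulVec (k : n) (u : n → ℝ) :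
    hA.eigenvectorBasis k ⬝ᵥ (A *ᵥ u) = hA.eigenvalues k * (hA.eigenvectorBasis k ⬝ᵥ u) := by
  rw [dotProduct_mulVec, ← mulVec_transpose, ← conjTranspose_eq_transpose_of_trivial, hA.eq,
    hA.mulVec_eigenvectorBasis, smul_dotProduct, smul_eq_mul]

end

variable {n : ℕ} {A : Matrix (Fin n) (Fin n) ℝ}

noncomputable def secondEigenvalue (hA : A.IsHermitian) (hn : 1 < n) : ℝ :=
  (hA.eigenvalues ∘ Tuple.sort hA.eigenvalues) ⟨1, hn⟩

theorem secondEigenvalue_mul_dotProduct_self_le (hA : A.IsHermitian) (hn : 1 < n)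
    (hgap : 0 < hA.secondEigenvalue hn) {φ v : Fin n → ℝ} (hφ : φ ≠ 0) (hAφ : A *ᵥ φ = 0)
    (hv : φ ⬝ᵥ v = 0) :
    hA.secondEigenvalue hn * (v ⬝ᵥ v) ≤ v ⬝ᵥ (A *ᵥ v) := by
  set μ := hA.eigenvalues
  set c : Fin n → ℝ := fun k => hA.eigenvectorBasis k ⬝ᵥ v
  set b : Fin n → ℝ := fun k => hA.eigenvectorBasis k ⬝ᵥ φ
  set k₀ := Tuple.sort μ ⟨0, by omega⟩
  have hμ : ∀ k ≠ k₀, hA.secondEigenvalue hn ≤ μ k := fun k hk =>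
    Tuple.comp_sort_one_le_of_ne_sort_zero hn μ hk
  -- every eigenvalue other than the `k₀`-th is positive, so `φ ∈ ker A` is a multiple of `B k₀`
  have hb : ∀ k ≠ k₀, b k = 0 := fun k hk => by
    have := hA.eigenvectorBasis_dotProduct_mulVec k φ
    rw [hAφ, dotProduct_zero, eq_comm, mul_eq_zero] at this
    exact this.resolve_left (hgap.trans_le (hμ k hk)).ne'
  have hb₀ : b k₀ ≠ 0 := fun h₀ => hφ <| by
    have hφφ : φ ⬝ᵥ φ = ∑ k, b k * b k := hA.dotProduct_eq_sum_eigenvectorBasis φ φ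
    rw [Finset.sum_eq_single k₀ (fun k _ hk => by rw [hb k hk, zero_mul]) (by simp), h₀,
      zero_mul] at hφφ
    exact dotProduct_self_eq_zero.mp hφφ
  have hc₀ : c k₀ = 0 := by
    have hφv : φ ⬝ᵥ v = ∑ k, b k * c k := hA.dotProduct_eq_sum_eigenvectorBasis φ v
    rw [hv, Finset.sum_eq_single k₀ (fun k _ hk => by rw [hb k hk, zero_mul]) (by simp),
      eq_comm, mul_eq_zero] at hφv
    exact hφv.resolve_left hb₀
  have hvv : v ⬝ᵥ v = ∑ k, c k * c k := hA.dotProduct_eq_sum_eigenvectorBasis v v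
  have hvAv : v ⬝ᵥ (A *ᵥ v) = ∑ k, μ k * (c k * c k) := by
    rw [hA.dotProduct_eq_sum_eigenvectorBasis]
    exact Finset.sum_congr rfl fun k _ => by rw [hA.eigenvectorBasis_dotProduct_mulVec]; ring
  rw [hvv, hvAv, Finset.mul_sum]
  refine Finset.sum_le_sum fun k _ => ?_
  obtain rfl | hk := eq_or_ne k k₀
  · simp [hc₀]
  · exact mul_le_mul_of_nonneg_right (hμ k hk) (mul_self_nonneg _)

end Matrix.IsHermitian

section NormalizedLaplacian

variable {ι : Type*} [Fintype ι] [DecidableEq ι] (w : ι → ι → ℝ)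

noncomputable def normalizedLaplacian : Matrix ι ι ℝ :=
  1 - of fun i j => w i j / (Real.sqrt (∑ k, w i k) * Real.sqrt (∑ k, w j k))

variable {w}

theorem normalizedLaplacian_mulVec_sqrt_degree_mul (hdeg : ∀ i, 0 < ∑ j, w i j) (y : ι → ℝ)
    (i : ι) :
    (normalizedLaplacian w *ᵥ fun j => Real.sqrt (∑ k, w j k) * y j) i =
      Real.sqrt (∑ k, w i k) * y i - (∑ j, w i j * y j) / Real.sqrt (∑ k, w i k) := by
  have hsqrt : ∀ j, Real.sqrt (∑ k, w j k) ≠ 0 := fun j => (Real.sqrt_pos.mpr (hdeg j)).ne'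
  rw [normalizedLaplacian, sub_mulVec, one_mulVec, Pi.sub_apply, mulVec, dotProduct,
    Finset.sum_div]
  congr 1
  refine Finset.sum_congr rfl fun j _ => ?_
  rw [of_apply]
  field_simp [hsqrt i, hsqrt j]

theorem normalizedLaplacian_mulVec_sqrt_degree (hdeg : ∀ i, 0 < ∑ j, w i j) :
    normalizedLaplacian w *ᵥ (fun j => Real.sqrt (∑ k, w j k)) = 0 := by
  ext i
  have h := normalizedLaplacian_mulVec_sqrt_degree_mul hdeg 1 i
  simp only [Pi.one_apply, mul_one] at h
  rw [h, Pi.zero_apply, sub_eq_zero, eq_div_iff (Real.sqrt_pos.mpr (hdeg i)).ne',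
    Real.mul_self_sqrt (hdeg i).le]

theorem sqrt_degree_mul_dotProduct_normalizedLaplacian_mulVec (hwsymm : ∀ i j, w i j = w j i)
    (hdeg : ∀ i, 0 < ∑ j, w i j) (y : ι → ℝ) :
    (fun i => Real.sqrt (∑ k, w i k) * y i) ⬝ᵥ
        (normalizedLaplacian w *ᵥ fun j => Real.sqrt (∑ k, w j k) * y j) =
      1 / 2 * ∑ i, ∑ j, w i j * (y i - y j) ^ 2 := by
  have hsqrt : ∀ i, Real.sqrt (∑ k, w i k) ≠ 0 := fun i => (Real.sqrt_pos.mpr (hdeg i)).ne'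
  have hswap : ∑ i, ∑ j, w i j * y j ^ 2 = ∑ i, ∑ j, w i j * y i ^ 2 := by
    rw [Finset.sum_comm]; simp_rw [hwsymm]
  have hrow : ∀ i, Real.sqrt (∑ k, w i k) * y i *
      (Real.sqrt (∑ k, w i k) * y i - (∑ j, w i j * y j) / Real.sqrt (∑ k, w i k)) =
      (∑ j, w i j) * y i ^ 2 - y i * ∑ j, w i j * y j := fun i => by
    rw [mul_sub, mul_mul_mul_comm, Real.mul_self_sqrt (hdeg i).le]
    field_simp [hsqrt i]
  have hexpand : ∀ i j, w i j * (y i - y j) ^ 2 =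
      w i j * y i ^ 2 - 2 * (y i * (w i j * y j)) + w i j * y j ^ 2 := fun i j => by ring
  simp only [dotProduct, normalizedLaplacian_mulVec_sqrt_degree_mul hdeg, hrow, hexpand,
    Finset.sum_add_distrib, Finset.sum_sub_distrib, ← Finset.mul_sum, ← Finset.sum_mul, hswap]
  ring

end NormalizedLaplacian

theorem secondEigenvalue_mul_sum_degree_mul_sq_le {n : ℕ} (hn : 1 < n) {w : Fin n → Fin n → ℝ}
    (hwsymm : ∀ i j, w i j = w j i) (hdeg : ∀ i, 0 < ∑ j, w i j)
    (hL : (normalizedLaplacian w).IsHermitian) (hgap : 0 < hL.secondEigenvalue hn)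
    {y : Fin n → ℝ} (hy : ∑ i, (∑ j, w i j) * y i = 0) :
    hL.secondEigenvalue hn * ∑ i, (∑ j, w i j) * y i ^ 2 ≤
      1 / 2 * ∑ i, ∑ j, w i j * (y i - y j) ^ 2 := by
  set φ : Fin n → ℝ := fun i => Real.sqrt (∑ k, w i k)
  have hφ : φ ≠ 0 := fun h =>
    (Real.sqrt_pos.mpr (hdeg ⟨0, by omega⟩)).ne' (congrFun h ⟨0, by omega⟩)
  have hsq : ∀ i, φ i * φ i = ∑ k, w i k := fun i => Real.mul_self_sqrt (hdeg i).le
  have horth : φ ⬝ᵥ (fun i => φ i * y i) = 0 := by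
    simp only [dotProduct, ← mul_assoc, hsq, hy]
  have hnorm : (fun i => φ i * y i) ⬝ᵥ (fun i => φ i * y i) = ∑ i, (∑ j, w i j) * y i ^ 2 :=
    Finset.sum_congr rfl fun i _ => by rw [← hsq]; ring
  have := hL.secondEigenvalue_mul_dotProduct_self_le hn hgap hφ
    (normalizedLaplacian_mulVec_sqrt_degree hdeg) horth
  rwa [hnorm, sqrt_degree_mul_dotProduct_normalizedLaplacian_mulVec hwsymm hdeg] at this

theorem sum_mul_sq_norm_sub_norm_le {ι m : Type*} [Fintype ι] [Fintype m] [DecidableEq m]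
    {w : ι → ι → ℝ} (hw : ∀ i j, 0 ≤ w i j) {ρ : ι → ι → Matrix m m ℝ}
    (hρ : ∀ i j, ρ i j ∈ orthogonalGroup m ℝ) (x : ι → EuclideanSpace ℝ m) :
    ∑ i, ∑ j, w i j * (‖x i‖ - ‖x j‖) ^ 2 ≤
      ∑ i, ∑ j, w i j * ‖x i - toEuclideanLin (ρ i j) (x j)‖ ^ 2 := by
  refine Finset.sum_le_sum fun i _ => Finset.sum_le_sum fun j _ =>
    mul_le_mul_of_nonneg_left ?_ (hw i j)
  have hisom : ‖toEuclideanLin (ρ i j) (x j)‖ = ‖x j‖ :=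
    ContinuousLinearMap.norm_map_of_mem_unitary
      (Unitary.map_mem (toEuclideanCLM (𝕜 := ℝ) (n := m)) (hρ i j)) (x j)
  rw [← sq_abs, ← hisom]
  exact pow_le_pow_left₀ (abs_nonneg _) (abs_norm_sub_norm_le _ _) 2

theorem sum_mul_sub_sq {ι : Type*} [Fintype ι] (d r : ι → ℝ) (c : ℝ) :
    ∑ i, d i * (r i - c) ^ 2 =
      ∑ i, d i * r i ^ 2 - 2 * c * ∑ i, d i * r i + c ^ 2 * ∑ i, d i := by
  have hexpand : ∀ i, d i * (r i - c) ^ 2 = d i * r i ^ 2 - 2 * c * (d i * r i) + c ^ 2 * d i :=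
    fun i => by ring
  simp only [hexpand, Finset.sum_add_distrib, Finset.sum_sub_distrib, ← Finset.mul_sum]

theorem sum_mul_sub_one_sq_le {ι : Type*} [Fintype ι] {d r : ι → ℝ} (hd : ∀ i, 0 ≤ d i)
    (hr : ∀ i, 0 ≤ r i) (hvol : 0 < ∑ i, d i) (hnorm : ∑ i, d i * r i ^ 2 = ∑ i, d i) {t : ℝ}
    (hmean : ∑ i, d i * (r i - t) = 0) :
    ∑ i, d i * (r i - 1) ^ 2 ≤ 2 * ∑ i, d i * (r i - t) ^ 2 := by
  have hS : ∑ i, d i * r i = t * ∑ i, d i := by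
    rw [← sub_eq_zero, ← hmean, Finset.mul_sum, ← Finset.sum_sub_distrib]
    exact Finset.sum_congr rfl fun i _ => by ring
  have hvar : 0 ≤ ∑ i, d i * (r i - t) ^ 2 :=
    Finset.sum_nonneg fun i _ => mul_nonneg (hd i) (sq_nonneg _)
  have ht₀ : 0 ≤ t := by
    have : 0 ≤ ∑ i, d i * r i := Finset.sum_nonneg fun i _ => mul_nonneg (hd i) (hr i)
    exact nonneg_of_mul_nonneg_left (hS ▸ this) hvol
  simp only [sum_mul_sub_sq, hS, hnorm] at hvar ⊢
  have ht₁ : t ≤ 1 := by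
    have : 0 ≤ (1 - t ^ 2) * ∑ i, d i := by linear_combination hvar
    nlinarith [nonneg_of_mul_nonneg_left this hvol]
  nlinarith [mul_nonneg (mul_nonneg ht₀ (sub_nonneg.mpr ht₁)) hvol.le]

theorem sq_mul_sum_filter_le_sum_mul_sq {ι : Type*} [Fintype ι] {d f : ι → ℝ}
    (hd : ∀ i, 0 ≤ d i) {δ : ℝ} (hδ : 0 ≤ δ) :
    δ ^ 2 * ∑ i ∈ Finset.univ.filter (fun i => δ ≤ |f i|), d i ≤ ∑ i, d i * f i ^ 2 := by
  rw [Finset.mul_sum]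
  calc ∑ i ∈ Finset.univ.filter (fun i => δ ≤ |f i|), δ ^ 2 * d i
      ≤ ∑ i ∈ Finset.univ.filter (fun i => δ ≤ |f i|), d i * f i ^ 2 := by
        refine Finset.sum_le_sum fun i hi => ?_
        rw [mul_comm, ← sq_abs (f i)]
        gcongr
        · exact hd i
        · exact (Finset.mem_filter.mp hi).2
    _ ≤ ∑ i, d i * f i ^ 2 :=
        Finset.sum_le_sum_of_subset_of_nonneg (Finset.filter_subset _ _)
          fun i _ _ => mul_nonneg (hd i) (sq_nonneg _)

theorem stmt_14_general (n d : ℕ) (hn : 1 < n) (w : Fin n → Fin n → ℝ)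
    (hw : ∀ i j, 0 ≤ w i j) (hwsymm : ∀ i j, w i j = w j i)
    (hdeg : ∀ i, 0 < ∑ j, w i j)
    (ρ : Fin n → Fin n → Matrix (Fin d) (Fin d) ℝ)
    (hρ : ∀ i j, ρ i j ∈ Matrix.orthogonalGroup (Fin d) ℝ)
    (L0 : Matrix (Fin n) (Fin n) ℝ)
    (hL0 : L0 = 1 - Matrix.of (fun i j : Fin n =>
        w i j / (Real.sqrt (∑ k, w i k) * Real.sqrt (∑ k, w j k))))
    (hherm : L0.IsHermitian)
    (lam2 : ℝ)
    (hlam2 : lam2 = (hherm.eigenvalues ∘ Tuple.sort hherm.eigenvalues) ⟨1, hn⟩)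
    (hpos : 0 < lam2)
    (x : Fin n → EuclideanSpace ℝ (Fin d))
    (hnorm : ∑ i, (∑ j, w i j) * ‖x i‖ ^ 2 = ∑ i, ∑ j, w i j)
    (δ : ℝ) (hδ : 0 < δ) :
    (∑ i ∈ Finset.univ.filter (fun i => δ ≤ |‖x i‖ - 1|), ∑ j, w i j) /
        (∑ i, ∑ j, w i j)
      ≤ 4 / δ ^ 2 *
        ((((1 / 2) * ∑ i, ∑ j, w i j * ‖x i - Matrix.toEuclideanLin (ρ i j) (x j)‖ ^ 2) /
            (∑ i, (∑ j, w i j) * ‖x i‖ ^ 2)) / lam2) := by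
  obtain rfl : L0 = normalizedLaplacian w := hL0
  obtain rfl : lam2 = hherm.secondEigenvalue hn := hlam2
  set vol := ∑ i, ∑ j, w i j
  set η := 1 / 2 * ∑ i, ∑ j, w i j * ‖x i - Matrix.toEuclideanLin (ρ i j) (x j)‖ ^ 2 with hη
  set t := (∑ i, (∑ j, w i j) * ‖x i‖) / vol
  have hvol : 0 < vol := Finset.sum_pos (fun i _ => hdeg i) ⟨⟨0, by omega⟩, Finset.mem_univ _⟩
  have hmean : ∑ i, (∑ j, w i j) * (‖x i‖ - t) = 0 := by
    simp only [mul_sub, Finset.sum_sub_distrib, ← Finset.sum_mul]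
    rw [mul_div_cancel₀ _ hvol.ne', sub_self]
  have hpoincare := secondEigenvalue_mul_sum_degree_mul_sq_le hn hwsymm hdeg hherm hpos hmean
  simp only [sub_sub_sub_cancel_right] at hpoincare
  have hfrus := sum_mul_sq_norm_sub_norm_le hw hρ x
  have hbal := sum_mul_sub_one_sq_le (fun i => (hdeg i).le) (fun i => norm_nonneg (x i)) hvol
    hnorm hmean
  have hcheb := sq_mul_sum_filter_le_sum_mul_sq (f := fun i => ‖x i‖ - 1)
    (fun i => (hdeg i).le) hδ.le
  set volS := ∑ i ∈ Finset.univ.filter (fun i => δ ≤ |‖x i‖ - 1|), ∑ j, w i j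
  have hvolS : 0 ≤ volS := Finset.sum_nonneg fun i _ => (hdeg i).le
  have hkey : δ ^ 2 * volS * hherm.secondEigenvalue hn ≤ 2 * η := by
    linarith [mul_le_mul_of_nonneg_right (hcheb.trans hbal) hpos.le]
  rw [hnorm, div_le_iff₀ hvol, show 4 / δ ^ 2 * (η / vol / hherm.secondEigenvalue hn) * vol =
    4 * η / (δ ^ 2 * hherm.secondEigenvalue hn) by field_simp, le_div_iff₀ (by positivity)]
  nlinarith [mul_nonneg (mul_nonneg (sq_nonneg δ) hvolS) hpos.le]

theorem stmt_14 (n d : ℕ) (hn : 1 < n) (w : Fin n → Fin n → ℝ)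
    (hw : ∀ i j, 0 ≤ w i j) (hwsymm : ∀ i j, w i j = w j i)
    (hdeg : ∀ i, 0 < ∑ j, w i j)
    (ρ : Fin n → Fin n → Matrix (Fin d) (Fin d) ℝ)
    (hρ : ∀ i j, ρ i j ∈ Matrix.orthogonalGroup (Fin d) ℝ)
    (hρsymm : ∀ i j, ρ j i = (ρ i j)ᵀ)
    (L0 : Matrix (Fin n) (Fin n) ℝ)
    (hL0 : L0 = 1 - Matrix.of (fun i j : Fin n =>
        w i j / (Real.sqrt (∑ k, w i k) * Real.sqrt (∑ k, w j k))))
    (hherm : L0.IsHermitian)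
    (lam2 : ℝ)
    (hlam2 : lam2 = (hherm.eigenvalues ∘ Tuple.sort hherm.eigenvalues) ⟨1, hn⟩)
    (hpos : 0 < lam2)
    (x : Fin n → EuclideanSpace ℝ (Fin d))
    (hnorm : ∑ i, (∑ j, w i j) * ‖x i‖ ^ 2 = ∑ i, ∑ j, w i j)
    (δ : ℝ) (hδ : 0 < δ) :
    (∑ i ∈ Finset.univ.filter (fun i => δ ≤ |‖x i‖ - 1|), ∑ j, w i j) /
        (∑ i, ∑ j, w i j)
      ≤ 4 / δ ^ 2 *
        ((((1 / 2) * ∑ i, ∑ j, w i j * ‖x i - Matrix.toEuclideanLin (ρ i j) (x j)‖ ^ 2) /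
            (∑ i, (∑ j, w i j) * ‖x i‖ ^ 2)) / lam2) :=
  stmt_14_general n d hn w hw hwsymm hdeg ρ hρ L0 hL0 hherm lam2 hlam2 hpos x hnorm δ hδ
end

section
/- Let λ₁(L₁) ≤ … ≤ λ_d(L₁) be the d smallest eigenvalues of the normalized Connection Laplacian, and let ν_G = min over group potentials g : V → O(d) of ν(g) = (1/(2d·vol(G)))·Σ_{ij} w_{ij}‖g_i − ρ_{ij}g_j‖_F². Then (1/d)·Σ_{k=1}^d λ_k(L₁) ≤ ν_G. -/
/-!
For a group potential `g`, the `d` columns of `D^{1/2} g` are pairwise orthogonal vectors of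
squared norm `vol G`, and the sum of their Rayleigh quotients for `L₁` is `d · ν(g)`, since
`‖g_i - ρ_ij g_j‖² = 2d - 2 tr(g_iᵀ ρ_ij g_j)` for orthogonal matrices. In an eigenbasis of `L₁`
that sum becomes `∑ λ_p c_p` with weights `0 ≤ c_p ≤ vol G` summing to `d · vol G` (Bessel), and
such a weighted sum is at least `vol G` times the sum of the `d` smallest eigenvalues.
-/

open Matrix

theorem mul_sum_le_sum_mul_of_threshold {ι : Type*} [Fintype ι] [DecidableEq ι] (S : Finset ι)
    (ν c : ι → ℝ) {t v : ℝ} (hlow : ∀ i ∈ S, ν i ≤ t) (hhigh : ∀ i ∉ S, t ≤ ν i)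
    (hc0 : ∀ i, 0 ≤ c i) (hcv : ∀ i, c i ≤ v) (hsum : ∑ i, c i = S.card * v) :
    v * ∑ i ∈ S, ν i ≤ ∑ i, ν i * c i := by
  -- `∑ ν c - v ∑_S ν` equals `hS`'s sum plus `hSc`'s sum, once `hsum` is used.
  have hS : 0 ≤ ∑ i ∈ S, (ν i - t) * (c i - v) :=
    Finset.sum_nonneg fun i hi =>
      mul_nonneg_of_nonpos_of_nonpos (by linarith [hlow i hi]) (by linarith [hcv i])
  have hSc : 0 ≤ ∑ i ∈ Sᶜ, (ν i - t) * c i :=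
    Finset.sum_nonneg fun i hi =>
      mul_nonneg (by linarith [hhigh i (Finset.mem_compl.mp hi)]) (hc0 i)
  simp only [sub_mul, mul_sub, Finset.sum_sub_distrib, ← Finset.mul_sum, Finset.sum_const,
    nsmul_eq_mul] at hS hSc
  rw [← Finset.sum_add_sum_compl S c] at hsum
  rw [← Finset.sum_add_sum_compl S (fun i => ν i * c i), Finset.mul_sum]
  simp only [mul_comm v]
  linear_combination hS + hSc - t * hsum

theorem mul_sum_sort_le_sum_mul {N r : ℕ} (hr : 0 < r) (hrN : r ≤ N) (ν c : Fin N → ℝ) {v : ℝ}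
    (hc0 : ∀ m, 0 ≤ c m) (hcv : ∀ m, c m ≤ v) (hsum : ∑ m, c m = r * v) :
    v * ∑ k : Fin r, ν (Tuple.sort ν (Fin.castLE hrN k)) ≤ ∑ m, ν m * c m := by
  set σ := Tuple.sort ν
  have hmono : Monotone (ν ∘ σ) := Tuple.monotone_sort ν
  let S : Finset (Fin N) := Finset.univ.map (Fin.castLEEmb hrN)
  have hmem : ∀ m, m ∈ S ↔ (m : ℕ) < r := fun m =>
    ⟨fun hm => by obtain ⟨k, -, rfl⟩ := Finset.mem_map.mp hm; exact k.is_lt,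
     fun hm => Finset.mem_map.mpr ⟨⟨m, hm⟩, Finset.mem_univ _, rfl⟩⟩
  have hlast : r - 1 < N := by omega
  have key := mul_sum_le_sum_mul_of_threshold S (ν ∘ σ) (c ∘ σ) (t := ν (σ ⟨r - 1, hlast⟩))
    (fun m hm => hmono (Fin.mk_le_mk.mpr (by have := (hmem m).mp hm; omega)))
    (fun m hm => hmono (Fin.mk_le_mk.mpr (by have := (hmem m).not.mp hm; omega)))
    (fun m => hc0 _) (fun m => hcv _)
    (by
      rw [Finset.card_map, Finset.card_univ, Fintype.card_fin]
      exact (Equiv.sum_comp σ c).trans hsum)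
  rw [Finset.sum_map] at key
  exact key.trans_eq (Equiv.sum_comp σ fun m => ν m * c m)

namespace Matrix

variable {ι κ : Type*} [Fintype κ]

theorem transpose_mul_self_diag_nonneg (G : Matrix κ ι ℝ) (p : ι) : 0 ≤ (Gᵀ * G) p p :=
  Finset.sum_nonneg fun b _ => mul_self_nonneg (G b p)

variable [Fintype ι]

theorem transpose_mul_self_diag_le [DecidableEq κ] {G : Matrix κ ι ℝ} {v : ℝ} (hv : 0 ≤ v)
    (hG : G * Gᵀ = v • 1) (p : ι) : (Gᵀ * G) p p ≤ v := by
  set P := Gᵀ * G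
  have hP0 : 0 ≤ P p p := transpose_mul_self_diag_nonneg G p
  have hPP : P * P = v • P := by
    rw [Matrix.mul_assoc, ← Matrix.mul_assoc G, hG, Matrix.smul_mul, Matrix.mul_smul,
      Matrix.one_mul]
  have hsq : P p p * P p p ≤ v * P p p := by
    have hsymm : ∀ r, P r p = P p r := fun r => by
      rw [← Matrix.transpose_apply P, Matrix.transpose_mul, Matrix.transpose_transpose]
    calc P p p * P p p ≤ ∑ r, P p r * P r p := by
          simp only [hsymm]
          exact Finset.single_le_sum (f := fun r => P p r * P p r) (fun r _ => mul_self_nonneg _)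
            (Finset.mem_univ p)
      _ = v * P p p := by rw [← Matrix.mul_apply, hPP, Matrix.smul_apply, smul_eq_mul]
  rcases hP0.lt_or_eq with hpos | hzero
  · exact le_of_mul_le_mul_right (by linarith) hpos
  · rw [← hzero]; exact hv

theorem trace_transpose_mul_self [DecidableEq κ] {G : Matrix κ ι ℝ} {v : ℝ}
    (hG : G * Gᵀ = v • 1) : (Gᵀ * G).trace = Fintype.card κ * v := by
  rw [trace_mul_comm, hG, trace_smul, trace_one, smul_eq_mul, mul_comm]

theorem IsHermitian.exists_trace_mul_mul_transpose_eq [DecidableEq ι] {A : Matrix ι ι ℝ}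
    (hA : A.IsHermitian) (F : Matrix κ ι ℝ) :
    ∃ G : Matrix κ ι ℝ, G * Gᵀ = F * Fᵀ ∧
      (F * A * Fᵀ).trace = ∑ p, hA.eigenvalues p * (Gᵀ * G) p p := by
  set U : Matrix ι ι ℝ := (hA.eigenvectorUnitary : Matrix ι ι ℝ)
  have hUU : U * Uᵀ = 1 := by
    rw [← conjTranspose_eq_transpose_of_trivial, ← star_eq_conjTranspose]
    exact Unitary.coe_mul_star_self hA.eigenvectorUnitary
  have hA' : A = U * diagonal hA.eigenvalues * Uᵀ := by
    conv_lhs => rw [hA.spectral_theorem]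
    rw [Unitary.conjStarAlgAut_apply, star_eq_conjTranspose, conjTranspose_eq_transpose_of_trivial,
      RCLike.ofReal_real_eq_id, Function.id_comp]
  have hconj : F * A * Fᵀ = (F * U) * (diagonal hA.eigenvalues * (F * U)ᵀ) := by
    conv_lhs => rw [hA']
    simp only [transpose_mul, Matrix.mul_assoc]
  refine ⟨F * U, ?_, ?_⟩
  · rw [transpose_mul, Matrix.mul_assoc, ← Matrix.mul_assoc U, hUU, Matrix.one_mul]
  · rw [hconj, trace_mul_comm, Matrix.mul_assoc]
    simp only [trace, diag_apply, diagonal_mul]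

theorem IsHermitian.mul_sum_sort_eigenvalues_le_trace [DecidableEq ι] {A : Matrix ι ι ℝ}
    (hA : A.IsHermitian) {N r : ℕ} (hr : 0 < r) (hrN : r ≤ N) (e : Fin N ≃ ι)
    {F : Matrix (Fin r) ι ℝ} {v : ℝ} (hv : 0 ≤ v) (hF : F * Fᵀ = v • 1) :
    v * ∑ k : Fin r, (hA.eigenvalues ∘ e) (Tuple.sort (hA.eigenvalues ∘ e) (Fin.castLE hrN k))
      ≤ (F * A * Fᵀ).trace := by
  obtain ⟨G, hGF, htrace⟩ := hA.exists_trace_mul_mul_transpose_eq F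
  rw [hF] at hGF
  have hsum : ∑ m, (Gᵀ * G) (e m) (e m) = r * v := by
    rw [Equiv.sum_comp e fun p => (Gᵀ * G) p p]
    exact (trace_transpose_mul_self hGF).trans (by rw [Fintype.card_fin])
  rw [htrace, ← Equiv.sum_comp e]
  exact mul_sum_sort_le_sum_mul hr hrN _ _ (fun m => transpose_mul_self_diag_nonneg G _)
    (fun m => transpose_mul_self_diag_le hv hGF _) hsum

variable {m : Type*} [Fintype m]

theorem sum_sum_sq_eq_trace_transpose_mul_self (M : Matrix m m ℝ) :
    ∑ a, ∑ b, M a b ^ 2 = (Mᵀ * M).trace := by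
  simp only [trace, diag_apply, mul_apply, transpose_apply, sq]
  exact Finset.sum_comm

theorem sum_sum_sq_sub_of_mem_orthogonalGroup [DecidableEq m] {M N : Matrix m m ℝ}
    (hM : M ∈ orthogonalGroup m ℝ) (hN : N ∈ orthogonalGroup m ℝ) :
    ∑ a, ∑ b, (M - N) a b ^ 2 = 2 * (Fintype.card m - (Mᵀ * N).trace) := by
  have hNM : (Nᵀ * M).trace = (Mᵀ * N).trace := by
    rw [← trace_transpose, transpose_mul, transpose_transpose]
  rw [sum_sum_sq_eq_trace_transpose_mul_self, transpose_sub, sub_mul, mul_sub, mul_sub,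
    (mem_orthogonalGroup_iff' m ℝ).mp hM, (mem_orthogonalGroup_iff' m ℝ).mp hN]
  simp only [trace_sub, trace_one, hNM]
  ring

end Matrix

section ConnectionLaplacian

variable {n d : ℕ}

/-- The transpose of the `dn × d` matrix `D^{1/2} g` whose `i`-th block is `√(D i) • g i`. -/
noncomputable def potentialMatrix (D : Fin n → ℝ) (g : Fin n → Matrix (Fin d) (Fin d) ℝ) :
    Matrix (Fin d) (Fin n × Fin d) ℝ :=
  of fun b p => √(D p.1) * g p.1 p.2 b

theorem potentialMatrix_mul_transpose {D : Fin n → ℝ} (hD : ∀ i, 0 ≤ D i)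
    {g : Fin n → Matrix (Fin d) (Fin d) ℝ} (hg : ∀ i, g i ∈ orthogonalGroup (Fin d) ℝ) :
    potentialMatrix D g * (potentialMatrix D g)ᵀ = (∑ i, D i) • 1 := by
  ext b c
  have hcols : ∀ i, ∑ a, g i a b * g i a c = (1 : Matrix (Fin d) (Fin d) ℝ) b c := fun i => by
    rw [← (mem_orthogonalGroup_iff' _ ℝ).mp (hg i)]; rfl
  calc (potentialMatrix D g * (potentialMatrix D g)ᵀ) b c
      = ∑ i, D i * ∑ a, g i a b * g i a c := by
        simp only [mul_apply, transpose_apply, potentialMatrix, of_apply, Fintype.sum_prod_type,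
          Finset.mul_sum]
        refine Finset.sum_congr rfl fun i _ => Finset.sum_congr rfl fun a _ => ?_
        linear_combination g i a b * g i a c * Real.mul_self_sqrt (hD i)
    _ = ((∑ i, D i) • (1 : Matrix (Fin d) (Fin d) ℝ)) b c := by
        simp only [hcols, Matrix.smul_apply, smul_eq_mul, Finset.sum_mul]

noncomputable def normalizedConnectionAdjacency (D : Fin n → ℝ) (w : Fin n → Fin n → ℝ)
    (ρ : Fin n → Fin n → Matrix (Fin d) (Fin d) ℝ) : Matrix (Fin n × Fin d) (Fin n × Fin d) ℝ :=
  of fun p q => w p.1 q.1 * ρ p.1 q.1 p.2 q.2 / (√(D p.1) * √(D q.1))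

theorem trace_potentialMatrix_mul_adjacency {D : Fin n → ℝ} (hD : ∀ i, 0 < D i)
    (w : Fin n → Fin n → ℝ) (ρ : Fin n → Fin n → Matrix (Fin d) (Fin d) ℝ)
    (g : Fin n → Matrix (Fin d) (Fin d) ℝ) :
    (potentialMatrix D g * normalizedConnectionAdjacency D w ρ * (potentialMatrix D g)ᵀ).trace
      = ∑ i, ∑ j, w i j * ((g i)ᵀ * ρ i j * g j).trace := by
  have hsqrt : ∀ i, √(D i) ≠ 0 := fun i => (Real.sqrt_pos.mpr (hD i)).ne'
  have hentry : ∀ i j a a' b, √(D i) * g i a b * (w i j * ρ i j a a' / (√(D i) * √(D j)))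
      * (√(D j) * g j a' b) = w i j * (g i a b * ρ i j a a' * g j a' b) := by
    intro i j a a' b
    field_simp [hsqrt i, hsqrt j]
  simp only [trace, diag_apply, mul_apply, transpose_apply, Fintype.sum_prod_type,
    potentialMatrix, normalizedConnectionAdjacency, of_apply, Finset.sum_mul, Finset.mul_sum,
    hentry]
  -- reorder the summation indices from `b j a' i a` to `i j b a' a`
  conv_lhs => enter [2, b, 2, j]; rw [Finset.sum_comm]
  conv_lhs => enter [2, b]; rw [Finset.sum_comm]
  rw [Finset.sum_comm]
  conv_lhs => enter [2, i]; rw [Finset.sum_comm]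

theorem sum_weighted_sq_sub_eq_two_mul_trace {w : Fin n → Fin n → ℝ}
    (hdeg : ∀ i, 0 < ∑ j, w i j) {ρ : Fin n → Fin n → Matrix (Fin d) (Fin d) ℝ}
    (hρ : ∀ i j, ρ i j ∈ orthogonalGroup (Fin d) ℝ) {g : Fin n → Matrix (Fin d) (Fin d) ℝ}
    (hg : ∀ i, g i ∈ orthogonalGroup (Fin d) ℝ) :
    ∑ i, ∑ j, w i j * ∑ a, ∑ b, (g i - ρ i j * g j) a b ^ 2
      = 2 * (potentialMatrix (fun i => ∑ j, w i j) g
          * (1 - normalizedConnectionAdjacency (fun i => ∑ j, w i j) w ρ)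
          * (potentialMatrix (fun i => ∑ j, w i j) g)ᵀ).trace := by
  rw [Matrix.mul_sub, Matrix.sub_mul, Matrix.mul_one, trace_sub,
    potentialMatrix_mul_transpose (fun i => (hdeg i).le) hg,
    trace_potentialMatrix_mul_adjacency hdeg, trace_smul, trace_one, Fintype.card_fin]
  simp only [sum_sum_sq_sub_of_mem_orthogonalGroup (hg _) (mul_mem (hρ _ _) (hg _)),
    Fintype.card_fin, Matrix.mul_assoc, smul_eq_mul, mul_sub, Finset.sum_sub_distrib,
    Finset.mul_sum, Finset.sum_mul]
  simp only [mul_left_comm _ (2 : ℝ)]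

end ConnectionLaplacian

theorem stmt_19_general (n d : ℕ) (hn : 0 < n) (hd : 0 < d) (hdn : d ≤ n * d)
    (w : Fin n → Fin n → ℝ)
    (hdeg : ∀ i, 0 < ∑ j, w i j)
    (ρ : Fin n → Fin n → Matrix (Fin d) (Fin d) ℝ)
    (hρ : ∀ i j, ρ i j ∈ Matrix.orthogonalGroup (Fin d) ℝ)
    (L1 : Matrix (Fin n × Fin d) (Fin n × Fin d) ℝ)
    (hL1 : L1 = 1 - Matrix.of (fun p q : Fin n × Fin d =>
        w p.1 q.1 * ρ p.1 q.1 p.2 q.2 /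
          (Real.sqrt (∑ j, w p.1 j) * Real.sqrt (∑ j, w q.1 j))))
    (hherm : L1.IsHermitian)
    (g : Fin n → Matrix (Fin d) (Fin d) ℝ)
    (hg : ∀ i, g i ∈ Matrix.orthogonalGroup (Fin d) ℝ) :
    (1 / (d : ℝ)) * ∑ k : Fin d,
        (fun m : Fin (n * d) => hherm.eigenvalues (finProdFinEquiv.symm m))
          (Tuple.sort (fun m : Fin (n * d) => hherm.eigenvalues (finProdFinEquiv.symm m))
            (Fin.castLE hdn k))
      ≤ (1 / (2 * (d : ℝ) * ∑ i, ∑ j, w i j)) *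
          ∑ i, ∑ j, w i j * ∑ a, ∑ b, ((g i - ρ i j * g j) a b) ^ 2 := by
  have hL1' : 1 - normalizedConnectionAdjacency (fun i => ∑ j, w i j) w ρ = L1 := hL1.symm
  rw [sum_weighted_sq_sub_eq_two_mul_trace hdeg hρ hg, hL1']
  set D : Fin n → ℝ := fun i => ∑ j, w i j
  set F := potentialMatrix D g
  have hvol : 0 < ∑ i, D i := Finset.sum_pos (fun i _ => hdeg i) ⟨⟨0, hn⟩, Finset.mem_univ _⟩
  have hKyFan := hherm.mul_sum_sort_eigenvalues_le_trace hd hdn finProdFinEquiv.symm hvol.le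
    (potentialMatrix_mul_transpose (fun i => (hdeg i).le) hg)
  calc _ ≤ 1 / (d : ℝ) * ((F * L1 * Fᵀ).trace / ∑ i, D i) := by
        gcongr
        exact (le_div_iff₀' hvol).mpr hKyFan
    _ = _ := by field_simp

theorem stmt_19 (n d : ℕ) (hn : 0 < n) (hd : 0 < d) (hdn : d ≤ n * d)
    (w : Fin n → Fin n → ℝ)
    (hw : ∀ i j, 0 ≤ w i j) (hwsymm : ∀ i j, w i j = w j i)
    (hdeg : ∀ i, 0 < ∑ j, w i j)
    (ρ : Fin n → Fin n → Matrix (Fin d) (Fin d) ℝ)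
    (hρ : ∀ i j, ρ i j ∈ Matrix.orthogonalGroup (Fin d) ℝ)
    (hρsymm : ∀ i j, ρ j i = (ρ i j)ᵀ)
    (L1 : Matrix (Fin n × Fin d) (Fin n × Fin d) ℝ)
    (hL1 : L1 = 1 - Matrix.of (fun p q : Fin n × Fin d =>
        w p.1 q.1 * ρ p.1 q.1 p.2 q.2 /
          (Real.sqrt (∑ j, w p.1 j) * Real.sqrt (∑ j, w q.1 j))))
    (hherm : L1.IsHermitian)
    (g : Fin n → Matrix (Fin d) (Fin d) ℝ)
    (hg : ∀ i, g i ∈ Matrix.orthogonalGroup (Fin d) ℝ) :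
    (1 / (d : ℝ)) * ∑ k : Fin d,
        (fun m : Fin (n * d) => hherm.eigenvalues (finProdFinEquiv.symm m))
          (Tuple.sort (fun m : Fin (n * d) => hherm.eigenvalues (finProdFinEquiv.symm m))
            (Fin.castLE hdn k))
      ≤ (1 / (2 * (d : ℝ) * ∑ i, ∑ j, w i j)) *
          ∑ i, ∑ j, w i j * ∑ a, ∑ b, ((g i - ρ i j * g j) a b) ^ 2 :=
  stmt_19_general n d hn hd hdn w hdeg ρ hρ L1 hL1 hherm g hg
end
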